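/- There exists a permutation group G ≤ S_n (for some n) whose permutation polytope P(G) has dimension d and is combinatorially equivalent to the d-dimensional crosspolytope conv{±e₁, …, ±e_d} ⊆ ℝ^d if and only if d is a power of two. -/

import Mathlib

/-- The permutation matrix of `σ ∈ S_n`: entry `(i, j)` is `1` iff `σ j = i`. -/
def permMat {n : ℕ} (σ : Equiv.Perm (Fin n)) : Matrix (Fin n) (Fin n) ℝ :=
  Matrix.of fun i j => if σ j = i then 1 else 0

/-- The permutation polytope of a permutation group `G ≤ S_n`. -/
def permPoly {n : ℕ} (G : Subgroup (Equiv.Perm (Fin n))) :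
    Set (Matrix (Fin n) (Fin n) ℝ) :=
  convexHull ℝ {M | ∃ g ∈ G, M = permMat g}

/-- Two polytopes are combinatorially equivalent if there is an order isomorphism
between their posets of (exposed) faces, ordered by inclusion. -/
def CombEquiv {E F : Type*} [AddCommGroup E] [Module ℝ E] [TopologicalSpace E]
    [AddCommGroup F] [Module ℝ F] [TopologicalSpace F] (P : Set E) (Q : Set F) : Prop :=
  Nonempty ({A : Set E // IsExposed ℝ P A} ≃o {B : Set F // IsExposed ℝ Q B})

/-- The `d`-dimensional crosspolytope `conv {±e₁, …, ±e_d} ⊆ ℝ^d`. -/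
def crossPolytope (d : ℕ) : Set (Fin d → ℝ) :=
  convexHull ℝ ({p | ∃ i, p = Pi.single i (1 : ℝ)} ∪ {p | ∃ i, p = Pi.single i (-1 : ℝ)})


open Set

variable {E : Type*} [AddCommGroup E] [Module ℝ E] [TopologicalSpace E]

/-- Max principle: a linear functional on a point of a convex hull is dominated by its value
at some point of the generating set. -/
lemma maxPrinciple (l : E →L[ℝ] ℝ) {S : Set E} {x : E} (hx : x ∈ convexHull ℝ S) :
    ∃ v ∈ S, l x ≤ l v := by
  by_contra h
  push_neg at h
  have hS : S ⊆ {y | l y < l x} := fun v hv => h v hv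
  have hconv : Convex ℝ {y | l y < l x} := convex_halfSpace_lt (⟨l.map_add, l.map_smul⟩) _
  exact lt_irrefl (l x) (convexHull_min hS hconv hx)

/-- If `v` is the unique maximizer of `l` over `S`, then any maximizer of `l` in the hull is `v`. -/
lemma eq_of_max {l : E →L[ℝ] ℝ} {S : Set E} {v x : E} (hv : v ∈ S)
    (hmax : ∀ w ∈ S, l w ≤ l v) (huniq : ∀ w ∈ S, l w = l v → w = v)
    (hx : x ∈ convexHull ℝ S) (hlx : l v ≤ l x) : x = v := by
  rw [convexHull_eq] at hx
  obtain ⟨ι, t, w, z, hw0, hw1, hz, rfl⟩ := hx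
  have hlxv : l (t.centerMass w z) = l v := by
    refine le_antisymm ?_ hlx
    · obtain ⟨u, hu, hlu⟩ := maxPrinciple l (by
        rw [convexHull_eq]; exact ⟨ι, t, w, z, hw0, hw1, hz, rfl⟩)
      exact hlu.trans (hmax u hu)
  -- all points with positive weight equal v
  have hzv : ∀ i ∈ t, w i ≠ 0 → z i = v := by
    by_contra hcon
    push_neg at hcon
    obtain ⟨i0, hi0t, hwi0, hzi0⟩ := hcon
    have hstrict : l (z i0) < l v := lt_of_le_of_ne (hmax _ (hz i0 hi0t))
      (fun h => hzi0 (huniq _ (hz i0 hi0t) h))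
    have hwpos : 0 < w i0 := lt_of_le_of_ne (hw0 i0 hi0t) (Ne.symm hwi0)
    have hlt : ∑ i ∈ t, w i * l (z i) < ∑ i ∈ t, w i * l v := by
      refine Finset.sum_lt_sum (fun i hi => mul_le_mul_of_nonneg_left (hmax _ (hz i hi)) (hw0 i hi))
        ⟨i0, hi0t, by exact mul_lt_mul_of_pos_left hstrict hwpos⟩
    rw [← Finset.sum_mul, hw1, one_mul] at hlt
    have : l (t.centerMass w z) = ∑ i ∈ t, w i * l (z i) := by
      rw [Finset.centerMass, hw1, inv_one, one_smul, map_sum]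
      simp [mul_comm]
    rw [← this, hlxv] at hlt
    exact absurd hlt (lt_irrefl _)
  have : t.centerMass w z = v := by
    rw [Finset.centerMass, hw1, inv_one, one_smul]
    have : ∑ i ∈ t, w i • z i = ∑ i ∈ t, w i • v := by
      refine Finset.sum_congr rfl (fun i hi => ?_)
      by_cases hwi : w i = 0
      · simp [hwi]
      · rw [hzv i hi hwi]
    rw [this, ← Finset.sum_smul, hw1, one_smul]
  exact this

/-- Singleton of a strictly exposed vertex is an exposed face of the hull. -/
lemma exposed_singleton {l : E →L[ℝ] ℝ} {S : Set E} {v : E} (hv : v ∈ S)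
    (hmax : ∀ w ∈ S, l w ≤ l v) (huniq : ∀ w ∈ S, l w = l v → w = v) :
    IsExposed ℝ (convexHull ℝ S) {v} := by
  intro _
  refine ⟨l, ?_⟩
  ext x
  constructor
  · rintro rfl
    refine ⟨subset_convexHull ℝ S hv, fun y hy => ?_⟩
    obtain ⟨u, hu, hlu⟩ := maxPrinciple l hy
    exact hlu.trans (hmax u hu)
  · rintro ⟨hx, hmaxx⟩
    exact eq_of_max hv hmax huniq hx (hmaxx v (subset_convexHull ℝ S hv))

/-- Every nonempty exposed face of a convex hull contains a generating point. -/
lemma exposed_contains_vertex {S : Set E} {F : Set E}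
    (hF : IsExposed ℝ (convexHull ℝ S) F) (hne : F.Nonempty) :
    ∃ v ∈ S, v ∈ F := by
  obtain ⟨l, rfl⟩ := hF hne
  obtain ⟨x, hxP, hxmax⟩ := hne
  obtain ⟨v, hvS, hlv⟩ := maxPrinciple l hxP
  refine ⟨v, hvS, subset_convexHull ℝ S hvS, fun y hy => ?_⟩
  exact le_trans (hxmax y hy) hlv

open Set

section PosetStuff
variable {α β : Type*} [Preorder α] [Preorder β]

/-- Bottom element predicate. -/
def PBot (a : α) : Prop := ∀ b, a ≤ b
/-- Top element predicate. -/
def PTop (a : α) : Prop := ∀ b, b ≤ a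
/-- Atom predicate. -/
def PAtom (a : α) : Prop := ¬ PBot a ∧ ∀ b, b ≤ a → PBot b ∨ b = a

lemma OrderIso.pbot (f : α ≃o β) {a : α} (h : PBot a) : PBot (f a) := by
  intro b
  have := h (f.symm b)
  simpa using (f.le_iff_le.2 this).trans_eq (by simp)

lemma OrderIso.pbot_iff (f : α ≃o β) {a : α} : PBot (f a) ↔ PBot a :=
  ⟨fun h => by simpa using f.symm.pbot h, f.pbot⟩

lemma OrderIso.ptop (f : α ≃o β) {a : α} (h : PTop a) : PTop (f a) := by
  intro b
  simpa using f.le_iff_le.2 (h (f.symm b))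

lemma OrderIso.patom (f : α ≃o β) {a : α} (h : PAtom a) : PAtom (f a) := by
  refine ⟨fun hb => h.1 (by simpa using f.pbot_iff.1 hb), fun b hb => ?_⟩
  have := h.2 (f.symm b) (by simpa using f.symm.le_iff_le.2 hb)
  rcases this with h1 | h1
  · left; simpa using f.pbot h1
  · right; rw [← h1]; simp

lemma OrderIso.patom_iff (f : α ≃o β) {a : α} : PAtom (f a) ↔ PAtom a :=
  ⟨fun h => by simpa using f.symm.patom h, f.patom⟩

end PosetStuff

variable {E : Type*} [AddCommGroup E] [Module ℝ E] [TopologicalSpace E]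

lemma isExposed_self (P : Set E) : IsExposed ℝ P P := by
  intro _
  exact ⟨0, by ext x; simp⟩

/-- A separation datum for a vertex set. -/
def VSep (S : Set E) : Prop :=
  ∀ v ∈ S, ∃ l : E →L[ℝ] ℝ, (∀ w ∈ S, l w ≤ l v) ∧ (∀ w ∈ S, l w = l v → w = v)

lemma sep_singleton_exposed {S : Set E} (hsep : VSep S) {v : E} (hv : v ∈ S) :
    IsExposed ℝ (convexHull ℝ S) {v} := by
  obtain ⟨l, hmax, huniq⟩ := hsep v hv
  exact exposed_singleton hv hmax huniq

lemma pbot_empty {S : Set E} :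
    PBot (⟨∅, isExposed_empty⟩ : {A : Set E // IsExposed ℝ (convexHull ℝ S) A}) :=
  fun b => Set.empty_subset _

lemma pbot_iff_empty {S : Set E} (c : {A : Set E // IsExposed ℝ (convexHull ℝ S) A}) :
    PBot c ↔ c.1 = ∅ := by
  constructor
  · intro h
    have := h ⟨∅, isExposed_empty⟩
    exact Set.subset_empty_iff.1 this
  · intro h
    intro b
    rw [show c = ⟨∅, isExposed_empty⟩ from Subtype.ext h]
    exact Set.empty_subset _

lemma ptop_whole {S : Set E} :
    PTop (⟨convexHull ℝ S, isExposed_self _⟩ :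
      {A : Set E // IsExposed ℝ (convexHull ℝ S) A}) :=
  fun b => b.2.subset

lemma patom_iff {S : Set E} (hsep : VSep S)
    (c : {A : Set E // IsExposed ℝ (convexHull ℝ S) A}) :
    PAtom c ↔ ∃ v ∈ S, c.1 = {v} := by
  constructor
  · rintro ⟨hnb, hmin⟩
    have hne : c.1.Nonempty := by
      rcases Set.eq_empty_or_nonempty c.1 with h | h
      · exact absurd ((pbot_iff_empty c).2 h) hnb
      · exact h
    obtain ⟨v, hvS, hvc⟩ := exposed_contains_vertex c.2 hne
    have hsub : (⟨{v}, sep_singleton_exposed hsep hvS⟩ :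
        {A : Set E // IsExposed ℝ (convexHull ℝ S) A}) ≤ c := by
      intro x hx; rw [Set.mem_singleton_iff] at hx; subst hx; exact hvc
    rcases hmin _ hsub with h | h
    · exfalso
      have := (pbot_iff_empty _).1 h
      simp at this
    · exact ⟨v, hvS, by rw [← h]⟩
  · rintro ⟨v, hvS, hc⟩
    constructor
    · intro h
      have := (pbot_iff_empty c).1 h
      rw [hc] at this; simp at this
    · intro b hb
      have hb' : b.1 ⊆ {v} := by rw [← hc]; exact hb
      rcases Set.subset_singleton_iff_eq.1 hb' with h | h
      · left; exact (pbot_iff_empty b).2 h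
      · right; exact Subtype.ext (h.trans hc.symm)

/-- Atoms of the face poset are in bijection with an injective enumeration of the vertex set. -/
noncomputable def atomEquiv {ι : Type*} {S : Set E} (hsep : VSep S) (e : ι → E)
    (hinj : Function.Injective e) (hrange : Set.range e = S) :
    ι ≃ {c : {A : Set E // IsExposed ℝ (convexHull ℝ S) A} // PAtom c} := by
  refine Equiv.ofBijective (fun i => ⟨⟨{e i}, sep_singleton_exposed hsep (by
    rw [← hrange]; exact ⟨i, rfl⟩)⟩, (patom_iff hsep _).2 ⟨e i, by
    rw [← hrange]; exact ⟨i, rfl⟩, rfl⟩⟩) ⟨?_, ?_⟩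
  · intro i j hij
    apply hinj
    have : ({e i} : Set E) = {e j} := congrArg (fun c => c.1.1) hij
    simpa using this
  · rintro ⟨c, hc⟩
    obtain ⟨v, hvS, hcv⟩ := (patom_iff hsep c).1 hc
    rw [← hrange] at hvS
    obtain ⟨i, rfl⟩ := hvS
    exact ⟨i, by ext : 2; exact hcv.symm⟩

open Set

section Transfer

variable {E F : Type*}
  [AddCommGroup E] [Module ℝ E] [TopologicalSpace E] [IsTopologicalAddGroup E]
  [ContinuousSMul ℝ E] [T2Space E] [FiniteDimensional ℝ E]
  [AddCommGroup F] [Module ℝ F] [TopologicalSpace F] [IsTopologicalAddGroup F]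
  [ContinuousSMul ℝ F] [T2Space F] [FiniteDimensional ℝ F]

variable {P : Set E} (T : E →ᵃ[ℝ] F) (Sf : F →ᵃ[ℝ] E) (hST : ∀ x, Sf (T x) = x)

lemma affine_decomp (f : E →ᵃ[ℝ] F) (x : E) : f x = f.linear x + f 0 := by
  have := f.map_vadd 0 x
  simpa [vadd_eq_add] using this

include hST in
lemma transfer_image_isExposed {A : Set E} (hA : IsExposed ℝ P A) :
    IsExposed ℝ (T '' P) (T '' A) := by
  rintro ⟨y0, hy0⟩
  have hAne : A.Nonempty := by
    obtain ⟨x0, hx0, _⟩ := hy0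
    exact ⟨x0, hx0⟩
  obtain ⟨l, rfl⟩ := hA hAne
  set m : F →L[ℝ] ℝ :=
    LinearMap.toContinuousLinearMap ((l : E →ₗ[ℝ] ℝ) ∘ₗ Sf.linear) with hm
  have hmT : ∀ x : E, m (T x) = l x - l (Sf 0) := by
    intro x
    have h1 : Sf.linear (T x) = Sf (T x) - Sf 0 := by
      have := affine_decomp Sf (T x)
      rw [this]; abel
    simp only [hm, LinearMap.coe_toContinuousLinearMap', LinearMap.coe_comp,
      Function.comp_apply, h1, hST x]
    exact map_sub l x (Sf 0)
  refine ⟨m, ?_⟩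
  ext y
  constructor
  · rintro ⟨x, ⟨hxP, hxmax⟩, rfl⟩
    refine ⟨⟨x, hxP, rfl⟩, ?_⟩
    rintro y' ⟨x', hx', rfl⟩
    have := hxmax x' hx'
    linarith [hmT x', hmT x]
  · rintro ⟨⟨x, hxP, rfl⟩, hmax⟩
    refine ⟨x, ⟨hxP, fun x' hx' => ?_⟩, rfl⟩
    have := hmax (T x') ⟨x', hx', rfl⟩
    linarith [hmT x', hmT x]

lemma transfer_preimage_isExposed {B : Set F} (hB : IsExposed ℝ (T '' P) B) :
    IsExposed ℝ P {x ∈ P | T x ∈ B} := by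
  rintro ⟨x0, hx0P, hx0B⟩
  obtain ⟨m, hmB⟩ := hB ⟨T x0, hx0B⟩
  set l : E →L[ℝ] ℝ :=
    LinearMap.toContinuousLinearMap ((m : F →ₗ[ℝ] ℝ) ∘ₗ T.linear) with hl
  have hlT : ∀ x : E, m (T x) = l x + m (T 0) := by
    intro x
    rw [affine_decomp T x, map_add]
    simp [hl]
  refine ⟨l, ?_⟩
  ext x
  constructor
  · rintro ⟨hxP, hxB⟩
    rw [hmB] at hxB
    refine ⟨hxP, fun y hy => ?_⟩
    have h1 := hxB.2 (T y) ⟨y, hy, rfl⟩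
    linarith [hlT y, hlT x]
  · rintro ⟨hxP, hxmax⟩
    refine ⟨hxP, ?_⟩
    rw [hmB]
    refine ⟨⟨x, hxP, rfl⟩, ?_⟩
    rintro y' ⟨x', hx', rfl⟩
    have := hxmax x' hx'
    linarith [hlT x', hlT x]

include hST in
lemma transfer_image_eq {B : Set F} (hB : IsExposed ℝ (T '' P) B) :
    T '' {x ∈ P | T x ∈ B} = B := by
  ext y
  constructor
  · rintro ⟨x, ⟨_, hxB⟩, rfl⟩
    exact hxB
  · intro hy
    obtain ⟨x, hxP, rfl⟩ := hB.subset hy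
    exact ⟨x, ⟨hxP, hy⟩, rfl⟩

include hST in
lemma T_injective : Function.Injective T := by
  intro a b hab
  have := congrArg Sf hab
  rwa [hST, hST] at this

/-- The exposed-face posets of `P` and of an affinely-embedded copy of `P` are
order isomorphic. -/
noncomputable def transferOrderIso :
    {A : Set E // IsExposed ℝ P A} ≃o {B : Set F // IsExposed ℝ (T '' P) B} := by
  refine
  { toFun := fun A => ⟨T '' A.1, transfer_image_isExposed T Sf hST A.2⟩
    invFun := fun B => ⟨{x ∈ P | T x ∈ B.1}, transfer_preimage_isExposed T B.2⟩
    left_inv := ?_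
    right_inv := ?_
    map_rel_iff' := ?_ }
  · rintro ⟨A, hA⟩
    ext x
    simp only [Set.mem_setOf_eq, Set.mem_image]
    constructor
    · rintro ⟨hxP, x', hx'A, hTx⟩
      rwa [T_injective T Sf hST hTx] at hx'A
    · intro hx
      exact ⟨hA.subset hx, x, hx, rfl⟩
  · rintro ⟨B, hB⟩
    exact Subtype.ext (transfer_image_eq T Sf hST hB)
  · rintro ⟨A, hA⟩ ⟨A', hA'⟩
    constructor
    · intro h x hx
      have : T x ∈ T '' A' := h ⟨x, hx, rfl⟩
      obtain ⟨x', hx', hTx⟩ := this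
      rwa [← T_injective T Sf hST hTx]
    · intro h
      exact Set.image_mono h

include hST in
lemma sflin_tlin (y : E) : Sf.linear (T.linear y) = y := by
  have h1 : Sf (T y) = y := hST y
  have h2 : Sf (T 0) = 0 := hST 0
  have h3 : Sf (T.linear y +ᵥ T 0) = Sf.linear (T.linear y) +ᵥ Sf (T 0) :=
    Sf.map_vadd (T 0) (T.linear y)
  have h4 : T y = T.linear y + T 0 := affine_decomp T y
  rw [h4] at h1
  rw [show T.linear y +ᵥ T 0 = T.linear y + T 0 from rfl] at h3
  rw [h3] at h1
  rw [h2] at h1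
  simpa using h1

include hST in
lemma tlin_injective : Function.Injective T.linear := by
  intro a b hab
  have := congrArg Sf.linear hab
  rwa [sflin_tlin T Sf hST, sflin_tlin T Sf hST] at this

include hST in
lemma transfer_finrank :
    Module.finrank ℝ (affineSpan ℝ (T '' P)).direction
      = Module.finrank ℝ (affineSpan ℝ P).direction := by
  rw [← AffineSubspace.map_span T P, AffineSubspace.map_direction]
  exact ((Submodule.equivMapOfInjective T.linear (tlin_injective T Sf hST)
    (affineSpan ℝ P).direction).symm.finrank_eq)

end Transfer

open Set

/-- vertex set of the crosspolytope -/
def crossVerts (d : ℕ) : Set (Fin d → ℝ) :=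
  {p | ∃ i, p = Pi.single i (1 : ℝ)} ∪ {p | ∃ i, p = Pi.single i (-1 : ℝ)}

lemma crossPolytope_eq (d : ℕ) : crossPolytope d = convexHull ℝ (crossVerts d) := rfl

/-- enumeration of the crosspolytope vertices -/
def crossEnum (d : ℕ) : Fin d × Bool → (Fin d → ℝ) :=
  fun ib => Pi.single ib.1 (if ib.2 then (1:ℝ) else -1)

lemma crossEnum_apply_eval (d : ℕ) (i j : Fin d) (b : Bool) :
    crossEnum d (i, b) j = if j = i then (if b then (1:ℝ) else -1) else 0 := by
  simp only [crossEnum]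
  by_cases h : j = i
  · subst h; simp
  · rw [Pi.single_eq_of_ne h]; simp [h]

lemma crossEnum_injective (d : ℕ) : Function.Injective (crossEnum d) := by
  rintro ⟨i, b⟩ ⟨j, c⟩ h
  have hii : (if b then (1:ℝ) else -1) = if i = j then (if c then (1:ℝ) else -1) else 0 := by
    have := congrFun h i
    rwa [crossEnum_apply_eval, crossEnum_apply_eval, if_pos rfl] at this
  by_cases hij : i = j
  · subst hij
    rw [if_pos rfl] at hii
    have hbc : b = c := by
      rcases b <;> rcases c
      · rfl
      · exfalso; norm_num at hii
      · exfalso; norm_num at hii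
      · rfl
    rw [hbc]
  · exfalso
    rw [if_neg hij] at hii
    rcases b <;> norm_num at hii

lemma crossEnum_range (d : ℕ) : Set.range (crossEnum d) = crossVerts d := by
  ext p
  constructor
  · rintro ⟨⟨i, b⟩, rfl⟩
    rcases b
    · exact Or.inr ⟨i, by simp [crossEnum]⟩
    · exact Or.inl ⟨i, by simp [crossEnum]⟩
  · rintro (⟨i, rfl⟩ | ⟨i, rfl⟩)
    · exact ⟨⟨i, true⟩, by simp [crossEnum]⟩
    · exact ⟨⟨i, false⟩, by simp [crossEnum]⟩

lemma crossVerts_sep (d : ℕ) : VSep (crossVerts d) := by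
  rintro v hv
  rw [← crossEnum_range] at hv
  obtain ⟨⟨i, b⟩, rfl⟩ := hv
  set s : ℝ := if b then (1:ℝ) else -1 with hs
  refine ⟨s • ContinuousLinearMap.proj i, ?_, ?_⟩
  · rintro w hw
    rw [← crossEnum_range] at hw
    obtain ⟨⟨j, c⟩, rfl⟩ := hw
    simp only [ContinuousLinearMap.smul_apply, ContinuousLinearMap.proj_apply, smul_eq_mul]
    rw [crossEnum_apply_eval, crossEnum_apply_eval, if_pos rfl]
    rcases b <;> rcases c <;> split_ifs with h1 <;> norm_num [hs] <;> simp_all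
  · rintro w hw heq
    rw [← crossEnum_range] at hw
    obtain ⟨⟨j, c⟩, rfl⟩ := hw
    simp only [ContinuousLinearMap.smul_apply, ContinuousLinearMap.proj_apply,
      smul_eq_mul] at heq
    rw [crossEnum_apply_eval, crossEnum_apply_eval, if_pos rfl] at heq
    by_cases hij : (i : Fin d) = j
    · subst hij
      rw [if_pos rfl] at heq
      have hbc : c = b := by
        rcases b <;> rcases c
        · rfl
        · exfalso; norm_num [hs] at heq
        · exfalso; norm_num [hs] at heq
        · rfl
      rw [hbc]
    · exfalso
      rw [if_neg (fun hh : (i : Fin d) = j => hij hh)] at heq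
      rcases b <;> norm_num [hs] at heq

open Set

lemma crossVerts_val_zero {d : ℕ} (l : (Fin d → ℝ) →L[ℝ] ℝ)
    (h : ∀ i : Fin d, l (Pi.single i (1:ℝ)) = 0) :
    ∀ u ∈ crossVerts d, l u = 0 := by
  rintro u (⟨i, rfl⟩ | ⟨i, rfl⟩)
  · exact h i
  · have : (Pi.single i (-1:ℝ)) = -(Pi.single i (1:ℝ) : Fin d → ℝ) := by
      ext j; by_cases hj : j = i
      · subst hj; simp
      · simp [Pi.single_eq_of_ne hj]
    rw [this, map_neg, h i, neg_zero]

/-- any exposed face of the crosspolytope containing an antipodal pair of vertices is everything -/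
lemma cross_antipodal_face {d : ℕ} (i0 : Fin d) {C : Set (Fin d → ℝ)}
    (hC : IsExposed ℝ (crossPolytope d) C) (h1 : Pi.single i0 (1:ℝ) ∈ C)
    (h2 : Pi.single i0 (-1:ℝ) ∈ C) : C = crossPolytope d := by
  obtain ⟨l, rfl⟩ := hC ⟨_, h1⟩
  set v : Fin d → ℝ := Pi.single i0 (1:ℝ) with hv
  set w : Fin d → ℝ := Pi.single i0 (-1:ℝ) with hw
  have hwv : w = -(v : Fin d → ℝ) := by
    ext j; by_cases hj : j = i0
    · subst hj; simp [hv, hw]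
    · simp [hv, hw, Pi.single_eq_of_ne hj]
  have hvP : v ∈ crossPolytope d := h1.1
  have hwP : w ∈ crossPolytope d := h2.1
  have hlv : l v = 0 := by
    have h3 : l w ≤ l v := h1.2 w hwP
    have h4 : l v ≤ l w := h2.2 v hvP
    have : l w = - l v := by rw [hwv, map_neg]
    linarith
  have hvert1 : ∀ i : Fin d, l (Pi.single i (1:ℝ)) = 0 := by
    intro i
    have hiP : (Pi.single i (1:ℝ)) ∈ crossPolytope d := by
      rw [crossPolytope_eq]
      exact subset_convexHull ℝ (crossVerts d)
        (Or.inl ⟨i, rfl⟩ : Pi.single i (1:ℝ) ∈ crossVerts d)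
    have hiP' : (Pi.single i (-1:ℝ)) ∈ crossPolytope d := by
      rw [crossPolytope_eq]
      exact subset_convexHull ℝ (crossVerts d)
        (Or.inr ⟨i, rfl⟩ : Pi.single i (-1:ℝ) ∈ crossVerts d)
    have hle : l (Pi.single i (1:ℝ)) ≤ 0 := by
      have := h1.2 _ hiP; rwa [hlv] at this
    have hneg : (Pi.single i (-1:ℝ)) = -(Pi.single i (1:ℝ) : Fin d → ℝ) := by
      ext j; by_cases hj : j = i
      · subst hj; simp
      · simp [Pi.single_eq_of_ne hj]
    have hle' : l (Pi.single i (-1:ℝ)) ≤ 0 := by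
      have := h1.2 _ hiP'; rwa [hlv] at this
    rw [hneg, map_neg] at hle'
    linarith
  have hall : ∀ x ∈ crossPolytope d, l x = 0 := by
    intro x hx
    obtain ⟨u, hu, hlu⟩ := maxPrinciple l hx
    obtain ⟨u', hu', hlu'⟩ := maxPrinciple (-l) hx
    have := crossVerts_val_zero l hvert1 u hu
    have h2' := crossVerts_val_zero l hvert1 u' hu'
    simp only [ContinuousLinearMap.neg_apply] at hlu'
    rw [this] at hlu
    rw [h2'] at hlu'
    linarith
  ext x
  constructor
  · exact fun hx => hx.1
  · intro hx
    refine ⟨hx, fun y hy => ?_⟩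
    rw [hall x hx, hall y hy]

lemma card_atoms_eq {α β : Type*} [Preorder α] [Preorder β] (f : α ≃o β) :
    Nat.card {a : α // PAtom a} = Nat.card {b : β // PAtom b} :=
  Nat.card_congr (Equiv.subtypeEquiv f.toEquiv (fun _ => f.patom_iff.symm))

lemma cross_card_atoms (d : ℕ) :
    Nat.card {c : {A : Set (Fin d → ℝ) // IsExposed ℝ (crossPolytope d) A} // PAtom c}
      = 2 * d := by
  rw [crossPolytope_eq]
  rw [← Nat.card_congr (atomEquiv (crossVerts_sep d) (crossEnum d) (crossEnum_injective d)
    (crossEnum_range d))]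
  simp [Nat.card_eq_fintype_card, mul_comm]

lemma cross_finrank (d : ℕ) :
    Module.finrank ℝ (affineSpan ℝ (crossPolytope d)).direction = d := by
  rw [crossPolytope_eq, affineSpan_convexHull, direction_affineSpan]
  have htop : vectorSpan ℝ (crossVerts d) = ⊤ := by
    apply eq_top_iff.2
    rw [← (Pi.basisFun ℝ (Fin d)).span_eq]
    apply Submodule.span_le.2
    rintro x ⟨i, rfl⟩
    have hmem : ((Pi.single i (1:ℝ) : Fin d → ℝ)) -ᵥ ((Pi.single i (-1:ℝ) : Fin d → ℝ)) ∈ vectorSpan ℝ (crossVerts d) :=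
      vsub_mem_vectorSpan ℝ (Or.inl ⟨i, rfl⟩ : Pi.single i (1:ℝ) ∈ crossVerts d)
        (Or.inr ⟨i, rfl⟩ : Pi.single i (-1:ℝ) ∈ crossVerts d)
    have heq : Pi.basisFun ℝ (Fin d) i
        = (2⁻¹ : ℝ) • (((Pi.single i (1:ℝ) : Fin d → ℝ)) - ((Pi.single i (-1:ℝ) : Fin d → ℝ))) := by
      ext j
      by_cases hj : j = i
      · subst hj; simp [Pi.basisFun_apply]; norm_num
      · simp [Pi.basisFun_apply, Pi.single_eq_of_ne hj]
    rw [heq]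
    exact Submodule.smul_mem _ _ hmem
  rw [htop, finrank_top]
  simp [Module.finrank_fintype_fun_eq_card]

open Set

section PermSide
variable {n : ℕ}

lemma permMat_injective : Function.Injective (permMat (n := n)) := by
  intro g h hgh
  apply Equiv.ext
  intro j
  have := congrFun (congrFun hgh (g j)) j
  simp only [permMat, Matrix.of_apply, if_pos rfl] at this
  by_contra hne
  rw [if_neg (fun hh : h j = g j => hne hh.symm)] at this
  norm_num at this

/-- entry functional on matrices -/
noncomputable def entryCLM (i j : Fin n) : Matrix (Fin n) (Fin n) ℝ →L[ℝ] ℝ :=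
  LinearMap.toContinuousLinearMap
    { toFun := fun M => M i j
      map_add' := fun M N => rfl
      map_smul' := fun c M => rfl }

@[simp] lemma entryCLM_apply (i j : Fin n) (M : Matrix (Fin n) (Fin n) ℝ) :
    entryCLM i j M = M i j := rfl

/-- the vertex set of the permutation polytope -/
def permVerts (G : Subgroup (Equiv.Perm (Fin n))) : Set (Matrix (Fin n) (Fin n) ℝ) :=
  {M | ∃ g ∈ G, M = permMat g}

lemma permPoly_eq (G : Subgroup (Equiv.Perm (Fin n))) :
    permPoly G = convexHull ℝ (permVerts G) := rfl

lemma permMat_sum_indicator (g h : Equiv.Perm (Fin n)) :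
    (∑ j : Fin n, entryCLM (g j) j) (permMat h)
      = ∑ j : Fin n, (if h j = g j then (1:ℝ) else 0) := by
  rw [ContinuousLinearMap.sum_apply]
  refine Finset.sum_congr rfl (fun j _ => ?_)
  simp [permMat]

lemma permVerts_sep (G : Subgroup (Equiv.Perm (Fin n))) : VSep (permVerts G) := by
  rintro v ⟨g, hg, rfl⟩
  refine ⟨∑ j : Fin n, entryCLM (g j) j, ?_, ?_⟩
  · rintro w ⟨h, hh, rfl⟩
    rw [permMat_sum_indicator, permMat_sum_indicator]
    refine Finset.sum_le_sum (fun j _ => ?_)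
    split_ifs <;> simp_all
  · rintro w ⟨h, hh, rfl⟩ heq
    rw [permMat_sum_indicator, permMat_sum_indicator] at heq
    have hle : ∀ j ∈ Finset.univ, (if h j = g j then (1:ℝ) else 0) ≤ 1 := by
      intro j _; split_ifs <;> norm_num
    have hgg : (∑ j : Fin n, if g j = g j then (1:ℝ) else 0) = ∑ _j : Fin n, (1:ℝ) :=
      Finset.sum_congr rfl (fun j _ => by simp)
    have hall := (Finset.sum_eq_sum_iff_of_le hle).1 (heq.trans hgg)
    have hgh : h = g := by
      apply Equiv.ext
      intro j
      have := hall j (Finset.mem_univ j)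
      by_contra hne
      rw [if_neg hne] at this
      norm_num at this
    rw [hgh]

/-- entries of `permPoly`'s atoms: in bijection with `G`. -/
noncomputable def permAtomEquiv (G : Subgroup (Equiv.Perm (Fin n))) :
    G ≃ {c : {A : Set (Matrix (Fin n) (Fin n) ℝ) // IsExposed ℝ (permPoly G) A} // PAtom c} := by
  rw [permPoly_eq]
  exact atomEquiv (permVerts_sep G) (fun g : G => permMat (g : Equiv.Perm (Fin n)))
    (fun a b hab => Subtype.ext (permMat_injective hab))
    (by
      ext M
      constructor
      · rintro ⟨g, rfl⟩; exact ⟨g, g.2, rfl⟩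
      · rintro ⟨g, hg, rfl⟩; exact ⟨⟨g, hg⟩, rfl⟩)
end PermSide

open Set

section Forward
variable {n : ℕ}

lemma group_endgame (G : Subgroup (Equiv.Perm (Fin n))) (g0 z0 : Equiv.Perm (Fin n))
    (hg0 : g0 ∈ G) (hz0 : z0 ∈ G) (hne : g0 ≠ z0)
    (hcond : ∀ h ∈ G, ∀ j, h j = g0 j ∨ h j = z0 j) :
    ∀ h ∈ G, h * h = 1 := by
  set w : Equiv.Perm (Fin n) := z0 * g0⁻¹ with hw
  have hwG : w ∈ G := G.mul_mem hz0 (G.inv_mem hg0)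
  have hcond' : ∀ k ∈ G, ∀ i, k i = i ∨ k i = w i := by
    intro k hk i
    have := hcond (k * g0) (G.mul_mem hk hg0) (g0⁻¹ i)
    simp only [Equiv.Perm.mul_apply, Equiv.Perm.inv_def, Equiv.apply_symm_apply] at this
    rcases this with h | h
    · left; exact h
    · right; rw [h, hw]; simp [Equiv.Perm.mul_apply]
  have hw2 : ∀ i, w (w i) = i := by
    intro i
    rcases hcond' (w * w) (G.mul_mem hwG hwG) i with h | h
    · simpa [Equiv.Perm.mul_apply] using h
    · simp only [Equiv.Perm.mul_apply] at h
      have : w i = i := w.injective h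
      rw [this, this]
  intro k hk
  apply Equiv.ext
  intro i
  simp only [Equiv.Perm.mul_apply, Equiv.Perm.one_apply]
  rcases hcond' k hk i with h | h
  · rw [h, h]
  · by_cases hwi : w i = i
    · rw [h, hwi, h, hwi]
    · rcases hcond' k hk (w i) with h2 | h2
      · exfalso
        apply hwi
        apply k.injective
        rw [h2, ← h]
      · rw [h, h2, hw2]

lemma forward_dir {d : ℕ} {G : Subgroup (Equiv.Perm (Fin n))}
    (hce : CombEquiv (permPoly G) (crossPolytope d)) : ∃ k : ℕ, d = 2 ^ k := by
  obtain ⟨f⟩ := hce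
  have hcard : Nat.card G = 2 * d := by
    rw [Nat.card_congr (permAtomEquiv G), card_atoms_eq f, cross_card_atoms]
  have hGpos : 0 < Nat.card G := Nat.card_pos
  have hd1 : 1 ≤ d := by omega
  have i0 : Fin d := ⟨0, hd1⟩
  set vP : Fin d → ℝ := Pi.single i0 (1:ℝ) with hvP
  set vM : Fin d → ℝ := Pi.single i0 (-1:ℝ) with hvM
  have hvPmem : vP ∈ crossVerts d := Or.inl ⟨i0, rfl⟩
  have hvMmem : vM ∈ crossVerts d := Or.inr ⟨i0, rfl⟩
  have hvPM : vP ≠ vM := by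
    intro h
    have := congrFun h i0
    simp only [hvP, hvM, Pi.single_eq_same] at this
    norm_num at this
  set a1 : {A : Set (Fin d → ℝ) // IsExposed ℝ (crossPolytope d) A} :=
    ⟨{vP}, sep_singleton_exposed (crossVerts_sep d) hvPmem⟩ with ha1
  set a2 : {A : Set (Fin d → ℝ) // IsExposed ℝ (crossPolytope d) A} :=
    ⟨{vM}, sep_singleton_exposed (crossVerts_sep d) hvMmem⟩ with ha2
  set b1 := f.symm a1 with hb1
  set b2 := f.symm a2 with hb2
  have hb1atom : PAtom b1 :=
    f.symm.patom ((patom_iff (crossVerts_sep d) a1).2 ⟨vP, hvPmem, rfl⟩)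
  have hb2atom : PAtom b2 :=
    f.symm.patom ((patom_iff (crossVerts_sep d) a2).2 ⟨vM, hvMmem, rfl⟩)
  obtain ⟨g0, hg0G, hb1v⟩ : ∃ g ∈ G, b1.1 = {permMat g} := by
    obtain ⟨v, ⟨g, hgG, rfl⟩, hv⟩ := (patom_iff (permVerts_sep G) b1).1 hb1atom
    exact ⟨g, hgG, hv⟩
  obtain ⟨z0, hz0G, hb2v⟩ : ∃ g ∈ G, b2.1 = {permMat g} := by
    obtain ⟨v, ⟨g, hgG, rfl⟩, hv⟩ := (patom_iff (permVerts_sep G) b2).1 hb2atom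
    exact ⟨g, hgG, hv⟩
  have hgz : g0 ≠ z0 := by
    intro h
    subst h
    have hb12 : b1 = b2 := Subtype.ext (hb1v.trans hb2v.symm)
    have ha12 : a1 = a2 := by
      have := congrArg f hb12
      simp only [hb1, hb2, OrderIso.apply_symm_apply] at this
      exact this
    have := congrArg Subtype.val ha12
    simp only [ha1, ha2] at this
    exact hvPM (Set.singleton_eq_singleton_iff.1 this)
  set l : Matrix (Fin n) (Fin n) ℝ →L[ℝ] ℝ :=
    ∑ j : Fin n, (entryCLM (g0 j) j + entryCLM (z0 j) j) with hl
  have hlval : ∀ h : Equiv.Perm (Fin n), l (permMat h)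
      = ∑ j : Fin n, ((if h j = g0 j then (1:ℝ) else 0) + (if h j = z0 j then (1:ℝ) else 0)) := by
    intro h
    rw [hl, ContinuousLinearMap.sum_apply]
    refine Finset.sum_congr rfl (fun j _ => ?_)
    simp [permMat]
  set bound : Fin n → ℝ := fun j => 1 + (if g0 j = z0 j then (1:ℝ) else 0) with hbound
  have hterm_le : ∀ (h : Equiv.Perm (Fin n)) (j : Fin n),
      (if h j = g0 j then (1:ℝ) else 0) + (if h j = z0 j then (1:ℝ) else 0) ≤ bound j := by
    intro h j
    show _ ≤ (1:ℝ) + (if g0 j = z0 j then (1:ℝ) else 0)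
    by_cases hgzj : g0 j = z0 j
    · rw [if_pos hgzj]
      have e1 : (if h j = g0 j then (1:ℝ) else 0) ≤ 1 := by split_ifs <;> norm_num
      have e2 : (if h j = z0 j then (1:ℝ) else 0) ≤ 1 := by split_ifs <;> norm_num
      linarith
    · rw [if_neg hgzj]
      by_cases hh1 : h j = g0 j
      · have hh2 : ¬ (h j = z0 j) := fun hc => hgzj (hh1.symm.trans hc)
        rw [if_pos hh1, if_neg hh2]
      · rw [if_neg hh1]
        have e2 : (if h j = z0 j then (1:ℝ) else 0) ≤ 1 := by split_ifs <;> norm_num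
        linarith
  have hg0max : l (permMat g0) = ∑ j : Fin n, bound j := by
    rw [hlval]
    refine Finset.sum_congr rfl (fun j _ => ?_)
    show (if g0 j = g0 j then (1:ℝ) else 0) + (if g0 j = z0 j then (1:ℝ) else 0)
        = 1 + (if g0 j = z0 j then (1:ℝ) else 0)
    rw [if_pos rfl]
  have hvertle : ∀ h : Equiv.Perm (Fin n), l (permMat h) ≤ ∑ j : Fin n, bound j := by
    intro h
    rw [hlval]
    exact Finset.sum_le_sum (fun j _ => hterm_le h j)
  have hmax : ∀ y ∈ permPoly G, l y ≤ ∑ j : Fin n, bound j := by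
    intro y hy
    rw [permPoly_eq] at hy
    obtain ⟨v, ⟨h, hhG, rfl⟩, hle⟩ := maxPrinciple l hy
    exact hle.trans (hvertle h)
  set Fface : {A : Set (Matrix (Fin n) (Fin n) ℝ) // IsExposed ℝ (permPoly G) A} :=
    ⟨l.toExposed (permPoly G), ContinuousLinearMap.toExposed.isExposed⟩ with hFface
  have hMg0P : permMat g0 ∈ permPoly G :=
    subset_convexHull ℝ (permVerts G) ⟨g0, hg0G, rfl⟩
  have hMz0P : permMat z0 ∈ permPoly G :=
    subset_convexHull ℝ (permVerts G) ⟨z0, hz0G, rfl⟩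
  have hg0F : permMat g0 ∈ l.toExposed (permPoly G) :=
    ⟨hMg0P, fun y hy => (hmax y hy).trans_eq hg0max.symm⟩
  have hz0F : permMat z0 ∈ l.toExposed (permPoly G) := by
    refine ⟨hMz0P, fun y hy => (hmax y hy).trans ?_⟩
    rw [hlval]
    refine le_of_eq (Finset.sum_congr rfl (fun j _ => ?_)).symm
    show (if z0 j = g0 j then (1:ℝ) else 0) + (if z0 j = z0 j then (1:ℝ) else 0)
        = (1:ℝ) + (if g0 j = z0 j then (1:ℝ) else 0)
    rw [if_pos rfl]
    by_cases hgzj : g0 j = z0 j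
    · rw [if_pos hgzj, if_pos hgzj.symm]
    · rw [if_neg hgzj, if_neg (fun hc : z0 j = g0 j => hgzj hc.symm)]
      ring
  have hb1le : b1 ≤ Fface := by
    intro x hx
    rw [hb1v] at hx
    rw [Set.mem_singleton_iff] at hx
    subst hx
    exact hg0F
  have hb2le : b2 ≤ Fface := by
    intro x hx
    rw [hb2v] at hx
    rw [Set.mem_singleton_iff] at hx
    subst hx
    exact hz0F
  have h1 : vP ∈ (f Fface).1 := by
    have : a1 ≤ f Fface := by
      rw [show a1 = f b1 from (f.apply_symm_apply a1).symm]
      exact f.le_iff_le.2 hb1le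
    exact this rfl
  have h2 : vM ∈ (f Fface).1 := by
    have : a2 ≤ f Fface := by
      rw [show a2 = f b2 from (f.apply_symm_apply a2).symm]
      exact f.le_iff_le.2 hb2le
    exact this rfl
  have hfF : (f Fface).1 = crossPolytope d := cross_antipodal_face i0 (f Fface).2 h1 h2
  have htopC : PTop (⟨crossPolytope d, isExposed_self _⟩ :
      {A : Set (Fin d → ℝ) // IsExposed ℝ (crossPolytope d) A}) := ptop_whole
  have htopF : PTop Fface := by
    have hF : Fface = f.symm ⟨crossPolytope d, isExposed_self _⟩ := by
      rw [show (⟨crossPolytope d, isExposed_self _⟩ :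
        {A : Set (Fin d → ℝ) // IsExposed ℝ (crossPolytope d) A}) = f Fface from
        (Subtype.ext hfF).symm]
      exact (f.symm_apply_apply Fface).symm
    rw [hF]
    exact f.symm.ptop htopC
  have hPF : permPoly G ⊆ l.toExposed (permPoly G) :=
    htopF ⟨permPoly G, isExposed_self _⟩
  have hcond : ∀ h ∈ G, ∀ j, h j = g0 j ∨ h j = z0 j := by
    intro h hh
    have hMhP : permMat h ∈ permPoly G :=
      subset_convexHull ℝ (permVerts G) ⟨h, hh, rfl⟩
    have hMhF := hPF hMhP
    have hmaxh : l (permMat h) = ∑ j : Fin n, bound j := by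
      refine le_antisymm (hvertle h) ?_
      have := hMhF.2 (permMat g0) hMg0P
      rwa [hg0max] at this
    rw [hlval] at hmaxh
    have hall := (Finset.sum_eq_sum_iff_of_le (fun j _ => hterm_le h j)).1 hmaxh
    intro j
    have hj : (if h j = g0 j then (1:ℝ) else 0) + (if h j = z0 j then (1:ℝ) else 0)
        = 1 + (if g0 j = z0 j then (1:ℝ) else 0) := hall j (Finset.mem_univ j)
    by_cases hc1 : h j = g0 j
    · exact Or.inl hc1
    by_cases hc2 : h j = z0 j
    · exact Or.inr hc2
    exfalso
    rw [if_neg hc1, if_neg hc2] at hj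
    split_ifs at hj <;> norm_num at hj
  have hsq := group_endgame G g0 z0 hg0G hz0G hgz hcond
  haveI : Fact (Nat.Prime 2) := ⟨Nat.prime_two⟩
  have hpg : IsPGroup 2 ↥G := by
    intro g
    refine ⟨1, ?_⟩
    have hg := hsq g.1 g.2
    have : (g ^ 2 ^ 1 : ↥G) = g * g := by norm_num [pow_two]
    rw [this]
    exact Subtype.ext (by
      push_cast
      exact hg)
  obtain ⟨r, hr⟩ := IsPGroup.exists_card_eq hpg
  rw [hr] at hcard
  rcases r with _ | s
  · exfalso
    simp at hcard
    omega
  · refine ⟨s, ?_⟩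
    rw [pow_succ] at hcard
    omega
end Forward

open Set

section Chars

/-- sign character of `ZMod 2` -/
def bchar : ZMod 2 → ℝ := fun u => if u = 0 then 1 else -1

lemma zmod2_cases (u : ZMod 2) : u = 0 ∨ u = 1 := by
  have : ∀ u : ZMod 2, u = 0 ∨ u = 1 := by decide
  exact this u

lemma zmod2_add_self (c : ZMod 2) : c + c = 0 := by
  have : ∀ c : ZMod 2, c + c = 0 := by decide
  exact this c

lemma bchar_add (u v : ZMod 2) : bchar (u + v) = bchar u * bchar v := by
  have h11 : (1 + 1 : ZMod 2) = 0 := by decide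
  have h10 : (1 : ZMod 2) ≠ 0 := by decide
  rcases zmod2_cases u with hu | hu <;> rcases zmod2_cases v with hv | hv <;>
    subst hu <;> subst hv
  · norm_num [bchar]
  · norm_num [bchar, h10]
  · norm_num [bchar, h10]
  · rw [h11]
    norm_num [bchar, h10]

lemma bchar_zero : bchar 0 = 1 := by norm_num [bchar]

lemma bchar_one : bchar 1 = -1 := by norm_num [bchar]

/-- inner product mod 2 -/
def ip {k : ℕ} (a x : Fin k → ZMod 2) : ZMod 2 := ∑ i, a i * x i

lemma ip_add_left {k : ℕ} (a b x : Fin k → ZMod 2) : ip (a + b) x = ip a x + ip b x := by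
  simp [ip, add_mul, Finset.sum_add_distrib]

lemma ip_add_right {k : ℕ} (a x y : Fin k → ZMod 2) : ip a (x + y) = ip a x + ip a y := by
  simp [ip, mul_add, Finset.sum_add_distrib]

lemma ip_zero_left {k : ℕ} (x : Fin k → ZMod 2) : ip 0 x = 0 := by simp [ip]

lemma ip_single_one {k : ℕ} (a : Fin k → ZMod 2) (i0 : Fin k) :
    ip a (Pi.single i0 1) = a i0 := by
  rw [ip]
  rw [Finset.sum_eq_single i0]
  · rw [Pi.single_eq_same, mul_one]
  · intro b _ hb
    rw [Pi.single_eq_of_ne hb, mul_zero]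
  · intro h
    exact absurd (Finset.mem_univ i0) h

lemma ortho {k : ℕ} {a : Fin k → ZMod 2} (ha : a ≠ 0) :
    ∑ x : Fin k → ZMod 2, bchar (ip a x) = 0 := by
  obtain ⟨i0, hi0⟩ : ∃ i0, a i0 ≠ 0 := by
    by_contra h
    push_neg at h
    exact ha (funext h)
  have hai0 : a i0 = 1 := by
    rcases zmod2_cases (a i0) with h | h
    · exact absurd h hi0
    · exact h
  set s : Fin k → ZMod 2 := Pi.single i0 1 with hs
  have hre : ∑ x : Fin k → ZMod 2, bchar (ip a (x + s))
      = ∑ x : Fin k → ZMod 2, bchar (ip a x) :=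
    Fintype.sum_equiv (Equiv.addRight s) _ _ (fun x => rfl)
  have hval : ∀ x, bchar (ip a (x + s)) = - bchar (ip a x) := by
    intro x
    rw [ip_add_right, bchar_add, hs, ip_single_one, hai0, bchar_one]
    ring
  have : ∑ x : Fin k → ZMod 2, bchar (ip a (x + s))
      = - ∑ x : Fin k → ZMod 2, bchar (ip a x) := by
    rw [← Finset.sum_neg_distrib]
    exact Finset.sum_congr rfl (fun x _ => hval x)
  rw [this] at hre
  linarith

lemma add_self_eq_zero' {k : ℕ} (a : Fin k → ZMod 2) : a + a = 0 :=
  funext (fun i => zmod2_add_self (a i))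

lemma sum_bchar_ip_mul {k : ℕ} (a b : Fin k → ZMod 2) :
    ∑ x : Fin k → ZMod 2, bchar (ip a x) * bchar (ip b x)
      = if a = b then ((2:ℝ) ^ k) else 0 := by
  have hcomb : ∀ x, bchar (ip a x) * bchar (ip b x) = bchar (ip (a + b) x) := by
    intro x
    rw [ip_add_left, bchar_add]
  rw [Finset.sum_congr rfl (fun x _ => hcomb x)]
  by_cases hab : a = b
  · subst hab
    rw [if_pos rfl, add_self_eq_zero' a]
    have : ∀ x : Fin k → ZMod 2, bchar (ip 0 x) = 1 := by
      intro x; rw [ip_zero_left, bchar_zero]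
    rw [Finset.sum_congr rfl (fun x _ => this x), Finset.sum_const, nsmul_eq_mul, mul_one]
    simp
  · rw [if_neg hab]
    apply ortho
    intro h
    apply hab
    have := congrArg (fun c => c + b) h
    simpa [add_assoc, add_self_eq_zero' b, zero_add] using this
end Chars

open Set

section Construction
variable (k : ℕ)

/-- point set: (Fin k → ZMod 2) × ZMod 2 -/
noncomputable def eOm : Fin (2^(k+1)) ≃ ((Fin k → ZMod 2) × ZMod 2) :=
  (Fintype.equivFinOfCardEq (by simp [pow_succ])).symm

noncomputable def eA : Fin (2^k) ≃ (Fin k → ZMod 2) :=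
  (Fintype.equivFinOfCardEq (by simp)).symm

/-- the basic involution on Ω -/
def sigmaOm (v : (Fin k → ZMod 2) × ZMod 2) :
    Equiv.Perm ((Fin k → ZMod 2) × ZMod 2) :=
  Function.Involutive.toPerm (fun p => (p.1, p.2 + (ip v.1 p.1 + v.2)))
    (by
      intro p
      simp only []
      refine Prod.ext rfl ?_
      show p.2 + (ip v.1 p.1 + v.2) + (ip v.1 p.1 + v.2) = p.2
      rw [add_assoc, zmod2_add_self, add_zero])

lemma sigmaOm_apply (v : (Fin k → ZMod 2) × ZMod 2) (p : (Fin k → ZMod 2) × ZMod 2) :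
    sigmaOm k v p = (p.1, p.2 + (ip v.1 p.1 + v.2)) := rfl

/-- transported to `Fin (2^(k+1))` -/
noncomputable def permF (v : (Fin k → ZMod 2) × ZMod 2) : Equiv.Perm (Fin (2^(k+1))) :=
  (Equiv.permCongr (eOm k).symm) (sigmaOm k v)

lemma permF_apply (v : (Fin k → ZMod 2) × ZMod 2) (j : Fin (2^(k+1))) :
    permF k v j = (eOm k).symm (sigmaOm k v (eOm k j)) := by
  simp [permF, Equiv.permCongr_apply]

lemma sigmaOm_hom (v w : (Fin k → ZMod 2) × ZMod 2)
    (p : (Fin k → ZMod 2) × ZMod 2) :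
    sigmaOm k (v + w) p = sigmaOm k v (sigmaOm k w p) := by
  rw [sigmaOm_apply, sigmaOm_apply, sigmaOm_apply]
  refine Prod.ext rfl ?_
  show p.2 + (ip (v.1 + w.1) p.1 + (v.2 + w.2))
      = p.2 + (ip w.1 p.1 + w.2) + (ip v.1 p.1 + v.2)
  rw [ip_add_left]
  ring

lemma permF_hom (v w : (Fin k → ZMod 2) × ZMod 2) :
    permF k (v + w) = permF k v * permF k w := by
  apply Equiv.ext
  intro j
  rw [Equiv.Perm.mul_apply, permF_apply, permF_apply, permF_apply,
    Equiv.apply_symm_apply, sigmaOm_hom]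

/-- the group homomorphism -/
noncomputable def phiHom : Multiplicative ((Fin k → ZMod 2) × ZMod 2)
    →* Equiv.Perm (Fin (2^(k+1))) :=
  MonoidHom.mk' (fun v => permF k (Multiplicative.toAdd v))
    (fun a b => permF_hom k (Multiplicative.toAdd a) (Multiplicative.toAdd b))

/-- the subgroup -/
noncomputable def Gk : Subgroup (Equiv.Perm (Fin (2^(k+1)))) := (phiHom k).range

/-- the center matrix -/
noncomputable def Cmat : Matrix (Fin (2^(k+1))) (Fin (2^(k+1))) ℝ :=
  Matrix.of fun i j => if ((eOm k) j).1 = ((eOm k) i).1 then 1/2 else 0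

/-- vertex matrices -/
noncomputable def Mv (A : Fin k → ZMod 2) (b : ZMod 2) :
    Matrix (Fin (2^(k+1))) (Fin (2^(k+1))) ℝ :=
  permMat (permF k (A, b))

lemma Mv_entry (A : Fin k → ZMod 2) (b : ZMod 2) (i j : Fin (2^(k+1))) :
    Mv k A b i j = if (((eOm k) j).1 = ((eOm k) i).1
      ∧ ((eOm k) j).2 + (ip A ((eOm k) j).1 + b) = ((eOm k) i).2) then 1 else 0 := by
  have h : (permF k (A, b) j = i) ↔ (((eOm k) j).1 = ((eOm k) i).1
      ∧ ((eOm k) j).2 + (ip A ((eOm k) j).1 + b) = ((eOm k) i).2) := by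
    rw [permF_apply, Equiv.symm_apply_eq]
    constructor
    · intro h
      rw [← h]
      exact ⟨rfl, rfl⟩
    · rintro ⟨h1, h2⟩
      rw [sigmaOm_apply]
      exact Prod.ext h1 h2
  show (if permF k (A, b) j = i then (1:ℝ) else 0) = _
  rw [if_congr h rfl rfl]

lemma Mv_mem_permVerts (A : Fin k → ZMod 2) (b : ZMod 2) :
    Mv k A b ∈ permVerts (Gk k) :=
  ⟨permF k (A, b), ⟨Multiplicative.ofAdd (A, b), rfl⟩, rfl⟩

lemma key1 (A : Fin k → ZMod 2) : Mv k A 0 + Mv k A 1 = (2:ℝ) • Cmat k := by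
  ext i j
  rw [Matrix.add_apply, Matrix.smul_apply, Mv_entry, Mv_entry]
  show _ = (2:ℝ) * (if ((eOm k) j).1 = ((eOm k) i).1 then 1/2 else 0)
  by_cases hx : ((eOm k) j).1 = ((eOm k) i).1
  · rw [if_pos hx]
    have hz : ∀ (s t q : ZMod 2), ((t + (q + 0) = s) ∧ ¬(t + (q + 1) = s))
        ∨ (¬(t + (q + 0) = s) ∧ (t + (q + 1) = s)) := by decide
    rcases hz ((eOm k) i).2 ((eOm k) j).2 (ip A ((eOm k) j).1) with ⟨h1, h2⟩ | ⟨h1, h2⟩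
    · rw [if_pos ⟨hx, h1⟩, if_neg (fun hc => h2 hc.2)]
      norm_num
    · rw [if_neg (fun hc => h1 hc.2), if_pos ⟨hx, h2⟩]
      norm_num
  · rw [if_neg hx, if_neg (fun hc => hx hc.1), if_neg (fun hc => hx hc.1)]
    norm_num

/-- the direction matrices -/
noncomputable def Bmat (i : Fin (2^k)) : Matrix (Fin (2^(k+1))) (Fin (2^(k+1))) ℝ :=
  Mv k (eA k i) 0 - Cmat k

/-- the linear part of the affine embedding -/
noncomputable def Lmap : (Fin (2^k) → ℝ) →ₗ[ℝ] Matrix (Fin (2^(k+1))) (Fin (2^(k+1))) ℝ :=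
  ∑ i : Fin (2^k), (LinearMap.proj i).smulRight (Bmat k i)

lemma Lmap_apply (p : Fin (2^k) → ℝ) : Lmap k p = ∑ i : Fin (2^k), p i • Bmat k i := by
  rw [Lmap, LinearMap.sum_apply]
  rfl

/-- the affine embedding -/
noncomputable def Tmap : (Fin (2^k) → ℝ) →ᵃ[ℝ] Matrix (Fin (2^(k+1))) (Fin (2^(k+1))) ℝ :=
  AffineMap.mk' (fun p => Cmat k + Lmap k p) (Lmap k) 0
    (by
      intro p
      simp only [vsub_eq_sub, vadd_eq_add, sub_zero, map_zero, add_zero]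
      exact add_comm _ _)

lemma Tmap_apply (p : Fin (2^k) → ℝ) : Tmap k p = Cmat k + Lmap k p := rfl

lemma Tmap_single (i : Fin (2^k)) :
    Tmap k (Pi.single i (1:ℝ)) = Mv k (eA k i) 0 := by
  rw [Tmap_apply, Lmap_apply]
  rw [Finset.sum_eq_single i]
  · rw [Pi.single_eq_same, one_smul, Bmat]
    abel
  · intro b _ hb
    rw [Pi.single_eq_of_ne hb, zero_smul]
  · intro h
    exact absurd (Finset.mem_univ i) h

lemma Tmap_single_neg (i : Fin (2^k)) :
    Tmap k (Pi.single i (-1:ℝ)) = Mv k (eA k i) 1 := by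
  rw [Tmap_apply, Lmap_apply]
  rw [Finset.sum_eq_single i]
  · rw [Pi.single_eq_same, Bmat]
    have hk := key1 k (eA k i)
    have : Mv k (eA k i) 1 = (2:ℝ) • Cmat k - Mv k (eA k i) 0 := by
      rw [← hk]; abel
    rw [this, two_smul]
    module
  · intro b _ hb
    rw [Pi.single_eq_of_ne hb, zero_smul]
  · intro h
    exact absurd (Finset.mem_univ i) h

lemma zmod2_val_cases (b : ZMod 2) : b = 0 ∨ b = 1 := zmod2_cases b

lemma Tmap_image_verts : ⇑(Tmap k) '' crossVerts (2^k) = permVerts (Gk k) := by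
  ext M
  constructor
  · rintro ⟨v, hv, rfl⟩
    rcases hv with ⟨i, rfl⟩ | ⟨i, rfl⟩
    · rw [Tmap_single]
      exact Mv_mem_permVerts k _ _
    · rw [Tmap_single_neg]
      exact Mv_mem_permVerts k _ _
  · rintro ⟨g, ⟨v, rfl⟩, rfl⟩
    set w := Multiplicative.toAdd v with hw
    have hMv : permMat ((phiHom k) v) = Mv k w.1 w.2 := rfl
    rw [hMv]
    set i := (eA k).symm w.1 with hi
    have hAi : eA k i = w.1 := (eA k).apply_symm_apply w.1
    rcases zmod2_val_cases w.2 with hb | hb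
    · refine ⟨Pi.single i (1:ℝ), Or.inl ⟨i, rfl⟩, ?_⟩
      rw [Tmap_single, hAi, ← hb]
    · refine ⟨Pi.single i (-1:ℝ), Or.inr ⟨i, rfl⟩, ?_⟩
      rw [Tmap_single_neg, hAi, ← hb]

lemma indicator_bchar (c : ZMod 2) : (if c = 0 then (1:ℝ) else 0) - 1/2 = bchar c / 2 := by
  have h10 : ¬ (1 : ZMod 2) = 0 := by decide
  rcases zmod2_cases c with h | h <;> subst h
  · norm_num [bchar]
  · rw [if_neg h10]
    norm_num [bchar, h10]

lemma Bmat_entry_diag (i : Fin (2^k)) (x : Fin k → ZMod 2) :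
    Bmat k i ((eOm k).symm (x, 0)) ((eOm k).symm (x, 0))
      = bchar (ip (eA k i) x) / 2 := by
  have he : (eOm k) ((eOm k).symm (x, (0:ZMod 2))) = (x, 0) := (eOm k).apply_symm_apply _
  have hC : Cmat k ((eOm k).symm (x, (0:ZMod 2))) ((eOm k).symm (x, (0:ZMod 2))) = 1/2 := by
    show (if ((eOm k) ((eOm k).symm (x, (0:ZMod 2)))).1
        = ((eOm k) ((eOm k).symm (x, (0:ZMod 2)))).1 then (1/2:ℝ) else 0) = 1/2
    rw [if_pos rfl]
  rw [Bmat, Matrix.sub_apply, Mv_entry, he, hC]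
  have hcond : ((x, (0:ZMod 2)).1 = (x, (0:ZMod 2)).1
      ∧ (x, (0:ZMod 2)).2 + (ip (eA k i) (x, (0:ZMod 2)).1 + 0) = (x, (0:ZMod 2)).2)
      ↔ ip (eA k i) x = 0 := by
    constructor
    · rintro ⟨-, h2⟩
      simpa using h2
    · intro h
      refine ⟨rfl, ?_⟩
      show (0:ZMod 2) + (ip (eA k i) x + 0) = 0
      rw [h, add_zero, add_zero]
  rw [if_congr hcond rfl rfl]
  exact indicator_bchar _

lemma Lmap_injective : Function.Injective (Lmap k) := by
  rw [← LinearMap.ker_eq_bot, LinearMap.ker_eq_bot']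
  intro p hp
  have hx : ∀ x : Fin k → ZMod 2, ∑ i : Fin (2^k), p i * bchar (ip (eA k i) x) = 0 := by
    intro x
    set r := (eOm k).symm (x, (0:ZMod 2)) with hr
    have h0 : (Lmap k p) r r = 0 := by rw [hp]; rfl
    rw [Lmap_apply, Matrix.sum_apply] at h0
    have h1 : ∑ i : Fin (2^k), p i * (bchar (ip (eA k i) x) / 2) = 0 := by
      rw [← h0]
      refine (Finset.sum_congr rfl (fun i _ => ?_)).symm
      rw [Matrix.smul_apply, hr, Bmat_entry_diag, smul_eq_mul]
    have h2 : (∑ i : Fin (2^k), p i * bchar (ip (eA k i) x)) / 2 = 0 := by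
      rw [← h1, Finset.sum_div]
      exact Finset.sum_congr rfl (fun i _ => (mul_div_assoc _ _ _))
    have := div_eq_zero_iff.1 h2
    rcases this with h | h
    · exact h
    · norm_num at h
  funext i0
  have hA : ∑ x : Fin k → ZMod 2,
      (∑ i : Fin (2^k), p i * (bchar (ip (eA k i0) x) * bchar (ip (eA k i) x))) = 0 := by
    refine Finset.sum_eq_zero (fun x _ => ?_)
    have : ∑ i : Fin (2^k), p i * (bchar (ip (eA k i0) x) * bchar (ip (eA k i) x))
        = bchar (ip (eA k i0) x) * ∑ i : Fin (2^k), p i * bchar (ip (eA k i) x) := by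
      rw [Finset.mul_sum]
      exact Finset.sum_congr rfl (fun i _ => by ring)
    rw [this, hx x, mul_zero]
  have hB : ∑ x : Fin k → ZMod 2,
      (∑ i : Fin (2^k), p i * (bchar (ip (eA k i0) x) * bchar (ip (eA k i) x)))
      = p i0 * 2^k := by
    rw [Finset.sum_comm]
    have hinner : ∀ i : Fin (2^k), ∑ x : Fin k → ZMod 2,
        p i * (bchar (ip (eA k i0) x) * bchar (ip (eA k i) x))
        = p i * (if eA k i0 = eA k i then ((2:ℝ)^k) else 0) := by
      intro i
      rw [← Finset.mul_sum, sum_bchar_ip_mul]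
    rw [Finset.sum_congr rfl (fun i _ => hinner i)]
    rw [Finset.sum_eq_single i0]
    · rw [if_pos rfl]
    · intro b _ hb
      rw [if_neg (fun hc => hb (Equiv.injective (eA k) hc.symm))]
      ring
    · intro h
      exact absurd (Finset.mem_univ i0) h
  have := hB.symm.trans hA
  have h2k : ((2:ℝ)^k) ≠ 0 := by positivity
  have := mul_eq_zero.1 this
  rcases this with h | h
  · exact h
  · exact absurd h h2k

lemma reverse_dir :
    ∃ (n : ℕ) (G : Subgroup (Equiv.Perm (Fin n))),
      Module.finrank ℝ (affineSpan ℝ (permPoly G)).direction = 2^k ∧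
      CombEquiv (permPoly G) (crossPolytope (2^k)) := by
  obtain ⟨g, hg⟩ := (Lmap k).exists_leftInverse_of_injective
    (LinearMap.ker_eq_bot.2 (Lmap_injective k))
  set Sf : Matrix (Fin (2^(k+1))) (Fin (2^(k+1))) ℝ →ᵃ[ℝ] (Fin (2^k) → ℝ) :=
    AffineMap.mk' (fun y => g (y - Cmat k)) g 0 (by
      intro y
      simp only [vsub_eq_sub, vadd_eq_add, sub_zero]
      show g (y - Cmat k) = g y + g (0 - Cmat k)
      rw [map_sub, map_sub, map_zero]
      abel) with hSfdef
  have hST : ∀ p, Sf (Tmap k p) = p := by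
    intro p
    show g (Tmap k p - Cmat k) = p
    rw [Tmap_apply, add_sub_cancel_left]
    have := congrArg (fun (f : (Fin (2^k) → ℝ) →ₗ[ℝ] (Fin (2^k) → ℝ)) => f p) hg
    simpa using this
  have hPT : permPoly (Gk k) = ⇑(Tmap k) '' crossPolytope (2^k) := by
    rw [permPoly_eq, crossPolytope_eq, ← Tmap_image_verts k, ← AffineMap.image_convexHull]
  refine ⟨2^(k+1), Gk k, ?_, ?_⟩
  · rw [hPT, transfer_finrank (Tmap k) Sf hST, cross_finrank]
  · rw [CombEquiv, hPT]
    exact ⟨(transferOrderIso (Tmap k) Sf hST).symm⟩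

end Construction


/-- There is a permutation group whose permutation polytope has
dimension `d` and is combinatorially a `d`-crosspolytope iff `d` is a power of two. -/
theorem stmt_18 (d : ℕ) :
    (∃ (n : ℕ) (G : Subgroup (Equiv.Perm (Fin n))),
        Module.finrank ℝ (affineSpan ℝ (permPoly G)).direction = d ∧
        CombEquiv (permPoly G) (crossPolytope d)) ↔
      ∃ k : ℕ, d = 2 ^ k := by
  constructor
  · rintro ⟨n, G, -, hce⟩
    exact forward_dir hce
  · rintro ⟨k, rfl⟩
    exact reverse_dir k
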